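/- arXiv:2003.10785 — 11 statements merged into one kernel-verified Lean document; each statement's English description precedes it below -/
import Mathlib

section
/- Let H be a Hilbert space, P : H → K Gâteaux differentiable with derivative A = dP strongly monotone (constant α) and Lipschitz continuous (constant L), F ∈ H', and E := Re(P − F). Let X ⊆ H be a closed subspace and u_X ∈ X the Galerkin solution of ⟨Au_X, v⟩ = ⟨F, v⟩ for all v ∈ X. Then (α/2)‖u_X − v‖² ≤ E(v) − E(u_X) ≤ (L/2)‖u_X − v‖² for all v ∈ X. In particular, u_X is the unique minimizer of E over X. -/
/-!
Along the segment `t ↦ w + t • (v - w)` the derivative of `P` is `A (w + t • (v - w)) (v - w)`,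
and strong monotonicity resp. Lipschitz continuity of `A` squeeze its increment between
`α t ‖v - w‖²` and `L t ‖v - w‖²`; integrating over `[0, 1]` bounds the Bregman remainder
`P v - P w - A w (v - w)` between `α/2 ‖v - w‖²` and `L/2 ‖v - w‖²`. For the Galerkin solution
the linear term `A u_X (v - u_X)` equals `F (v - u_X)`, so the remainder is exactly `E v - E u_X`.
-/

open Set

theorem sub_le_sub_of_hasDerivAt_le {f g f' g' : ℝ → ℝ} {a b : ℝ} (hab : a ≤ b)
    (hf : ∀ t, HasDerivAt f (f' t) t) (hg : ∀ t, HasDerivAt g (g' t) t)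
    (hle : ∀ t ∈ Ioo a b, f' t ≤ g' t) : f b - f a ≤ g b - g a := by
  have hderiv : ∀ t, HasDerivAt (g - f) (g' t - f' t) t := fun t => (hg t).sub (hf t)
  have hmono : MonotoneOn (g - f) (Icc a b) :=
    monotoneOn_of_deriv_nonneg (convex_Icc a b)
      (fun t _ => (hderiv t).continuousAt.continuousWithinAt)
      (fun t _ => (hderiv t).differentiableAt.differentiableWithinAt)
      (fun t ht => by
        rw [interior_Icc] at ht
        rw [(hderiv t).deriv, sub_nonneg]
        exact hle t ht)
  have := hmono (left_mem_Icc.2 hab) (right_mem_Icc.2 hab) hab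
  simp only [Pi.sub_apply] at this
  linarith

theorem hasDerivAt_mul_add_half_mul_sq (a c t : ℝ) :
    HasDerivAt (fun t => t * a + c / 2 * t ^ 2) (a + c * t) t :=
  ((hasDerivAt_mul_const a).add ((hasDerivAt_pow 2 t).const_mul (c / 2))).congr_deriv
    (by norm_num; ring)

section Potential

variable {V : Type*} [NormedAddCommGroup V] [NormedSpace ℝ V]
  {P : V → ℝ} {A : V → V →L[ℝ] ℝ}

theorem hasDerivAt_comp_add_smul
    (hP : ∀ w v : V, HasDerivAt (fun t : ℝ => P (w + t • v)) (A w v) 0) (w v : V) (t : ℝ) :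
    HasDerivAt (fun s : ℝ => P (w + s • v)) (A (w + t • v) v) t := by
  have h := HasDerivAt.comp_sub_const t t (by rw [sub_self]; exact hP (w + t • v) v)
  refine h.congr_of_eventuallyEq (Filter.Eventually.of_forall fun s => ?_)
  simp only [add_assoc, ← add_smul, add_sub_cancel]

theorem mul_sq_norm_le_apply_sub_of_strongMono {α : ℝ}
    (hmono : ∀ v w : V, α * ‖w - v‖ ^ 2 ≤ (A w - A v) (w - v)) (w d : V) {t : ℝ} (ht : 0 < t) :
    α * t * ‖d‖ ^ 2 ≤ A (w + t • d) d - A w d := by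
  have h := hmono w (w + t • d)
  rw [add_sub_cancel_left, norm_smul, Real.norm_of_nonneg ht.le, map_smul,
    sub_apply, smul_eq_mul] at h
  nlinarith

theorem apply_sub_le_mul_sq_norm_of_lipschitz {L : ℝ}
    (hlip : ∀ v w : V, ‖A w - A v‖ ≤ L * ‖w - v‖) (w d : V) {t : ℝ} (ht : 0 ≤ t) :
    A (w + t • d) d - A w d ≤ L * t * ‖d‖ ^ 2 := by
  have h := hlip w (w + t • d)
  rw [add_sub_cancel_left, norm_smul, Real.norm_of_nonneg ht] at h
  calc A (w + t • d) d - A w d ≤ ‖(A (w + t • d) - A w) d‖ := le_abs_self _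
    _ ≤ ‖A (w + t • d) - A w‖ * ‖d‖ := (A (w + t • d) - A w).le_opNorm d
    _ ≤ L * (t * ‖d‖) * ‖d‖ := by gcongr
    _ = L * t * ‖d‖ ^ 2 := by ring

theorem mul_sq_norm_le_bregman_of_strongMono
    (hP : ∀ w v : V, HasDerivAt (fun t : ℝ => P (w + t • v)) (A w v) 0) {α : ℝ}
    (hmono : ∀ v w : V, α * ‖w - v‖ ^ 2 ≤ (A w - A v) (w - v)) (w v : V) :
    α / 2 * ‖v - w‖ ^ 2 ≤ P v - P w - A w (v - w) := by
  set d := v - w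
  have h := sub_le_sub_of_hasDerivAt_le zero_le_one
    (hasDerivAt_mul_add_half_mul_sq (A w d) (α * ‖d‖ ^ 2)) (hasDerivAt_comp_add_smul hP w d)
    fun t ht => by linarith [mul_sq_norm_le_apply_sub_of_strongMono hmono w d ht.1]
  simp only [zero_smul, one_smul, add_zero, add_sub_cancel, d] at h
  linarith

theorem bregman_le_mul_sq_norm_of_lipschitz
    (hP : ∀ w v : V, HasDerivAt (fun t : ℝ => P (w + t • v)) (A w v) 0) {L : ℝ}
    (hlip : ∀ v w : V, ‖A w - A v‖ ≤ L * ‖w - v‖) (w v : V) :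
    P v - P w - A w (v - w) ≤ L / 2 * ‖v - w‖ ^ 2 := by
  set d := v - w
  have h := sub_le_sub_of_hasDerivAt_le zero_le_one (hasDerivAt_comp_add_smul hP w d)
    (hasDerivAt_mul_add_half_mul_sq (A w d) (L * ‖d‖ ^ 2))
    fun t ht => by linarith [apply_sub_le_mul_sq_norm_of_lipschitz hlip w d ht.1.le]
  simp only [zero_smul, one_smul, add_zero, add_sub_cancel, d] at h
  linarith

end Potential

theorem energy_equivalence_and_unique_minimizer_general
    {H : Type*} [NormedAddCommGroup H] [InnerProductSpace ℝ H]
    (P : H → ℝ) (A : H → (H →L[ℝ] ℝ)) (F : H →L[ℝ] ℝ)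
    (hGateaux : ∀ w v : H, HasDerivAt (fun t : ℝ => P (w + t • v)) (A w v) 0)
    (α L : ℝ) (hα : 0 < α)
    (hmono : ∀ v w : H, α * ‖w - v‖ ^ 2 ≤ (A w - A v) (w - v))
    (hlip : ∀ v w : H, ‖A w - A v‖ ≤ L * ‖w - v‖)
    (X : Submodule ℝ H)
    (uX : H) (huXmem : uX ∈ X) (huX : ∀ v ∈ X, A uX v = F v)
    (E : H → ℝ) (hE : ∀ v, E v = P v - F v) :
    (∀ v ∈ X, α / 2 * ‖uX - v‖ ^ 2 ≤ E v - E uX ∧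
      E v - E uX ≤ L / 2 * ‖uX - v‖ ^ 2) ∧
    (∀ v ∈ X, E uX ≤ E v) ∧
    (∀ w ∈ X, (∀ v ∈ X, E w ≤ E v) → w = uX) := by
  have hbregman : ∀ v ∈ X, E v - E uX = P v - P uX - A uX (v - uX) := fun v hv => by
    rw [hE, hE, huX _ (X.sub_mem hv huXmem), map_sub]
    ring
  have hequiv : ∀ v ∈ X, α / 2 * ‖uX - v‖ ^ 2 ≤ E v - E uX ∧
      E v - E uX ≤ L / 2 * ‖uX - v‖ ^ 2 := fun v hv => by
    rw [hbregman v hv, norm_sub_rev]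
    exact ⟨mul_sq_norm_le_bregman_of_strongMono hGateaux hmono uX v,
      bregman_le_mul_sq_norm_of_lipschitz hGateaux hlip uX v⟩
  have hmin : ∀ v ∈ X, E uX ≤ E v := fun v hv =>
    sub_nonneg.1 <| le_trans (by positivity) (hequiv v hv).1
  refine ⟨hequiv, hmin, fun w hw hw_min => ?_⟩
  have hle : α / 2 * ‖uX - w‖ ^ 2 ≤ 0 := by linarith [(hequiv w hw).1, hw_min uX huXmem]
  have hzero : ‖uX - w‖ ^ 2 = 0 :=
    le_antisymm (nonpos_of_mul_nonpos_right hle (half_pos hα)) (sq_nonneg _)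
  exact (sub_eq_zero.1 (norm_eq_zero.1 (pow_eq_zero_iff two_ne_zero |>.1 hzero))).symm

/-- Energy equivalence for the Galerkin solution of a strongly monotone,
Lipschitz continuous potential operator, and uniqueness of the energy minimizer. -/
theorem energy_equivalence_and_unique_minimizer
    {H : Type*} [NormedAddCommGroup H] [InnerProductSpace ℝ H] [CompleteSpace H]
    (P : H → ℝ) (A : H → (H →L[ℝ] ℝ)) (F : H →L[ℝ] ℝ)
    (hGateaux : ∀ w v : H, HasDerivAt (fun t : ℝ => P (w + t • v)) (A w v) 0)
    (α L : ℝ) (hα : 0 < α) (hαL : α ≤ L)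
    (hmono : ∀ v w : H, α * ‖w - v‖ ^ 2 ≤ (A w - A v) (w - v))
    (hlip : ∀ v w : H, ‖A w - A v‖ ≤ L * ‖w - v‖)
    (X : Submodule ℝ H) (hX : IsClosed (X : Set H))
    (uX : H) (huXmem : uX ∈ X) (huX : ∀ v ∈ X, A uX v = F v)
    (E : H → ℝ) (hE : ∀ v, E v = P v - F v) :
    (∀ v ∈ X, α / 2 * ‖uX - v‖ ^ 2 ≤ E v - E uX ∧
      E v - E uX ≤ L / 2 * ‖uX - v‖ ^ 2) ∧
    (∀ v ∈ X, E uX ≤ E v) ∧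
    (∀ w ∈ X, (∀ v ∈ X, E w ≤ E v) → w = uX) :=
  energy_equivalence_and_unique_minimizer_general P A F hGateaux α L hα hmono hlip X uX huXmem huX E
    hE
end

section
/- In the setting of a strongly monotone (constant α), Lipschitz continuous (constant L) potential operator with energy E, suppose the iteration Φ_H satisfies the norm contraction ‖u⋆_H − Φ_H(v)‖ ≤ q‖u⋆_H − v‖ with q² = 1 − α²/L². Then E(Φ_H(v)) − E(u⋆_H) ≤ (L/α)q²·(E(v) − E(u⋆_H)) for all v ∈ X_H. Moreover, (L/α)q² = L/α − α/L < 1 if and only if L/α < (1+√5)/2. -/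
/-!
Coercivity turns the energy gap at `v` into a bound on `‖u⋆ - v‖²`, the norm contraction
shrinks it by `q²`, and the upper energy bound at `Φ v` converts it back, at the price of the
condition number `L / α`. With `x = L / α`, the resulting factor `x q² = x - 1/x` is below `1`
iff `x² - x - 1 = (x - φ)(x - ψ) < 0`, i.e. iff `x < φ`, since `ψ < 0 < x`.
-/

open Real goldenRatio

theorem energy_sub_le_of_norm_sub_le {H : Type*} [SeminormedAddCommGroup H] (E : H → ℝ)
    {u v w : H} {α L q : ℝ} (hα : 0 < α) (hL : 0 ≤ L)
    (hv : α / 2 * ‖u - v‖ ^ 2 ≤ E v - E u) (hw : E w - E u ≤ L / 2 * ‖u - w‖ ^ 2)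
    (hwv : ‖u - w‖ ≤ q * ‖u - v‖) :
    E w - E u ≤ L / α * q ^ 2 * (E v - E u) := by
  have hsq : ‖u - w‖ ^ 2 ≤ q ^ 2 * ‖u - v‖ ^ 2 := by
    simpa only [mul_pow] using pow_le_pow_left₀ (norm_nonneg _) hwv 2
  have hnorm : ‖u - v‖ ^ 2 ≤ 2 / α * (E v - E u) := by
    rw [div_mul_eq_mul_div, le_div_iff₀ hα]
    linarith
  calc E w - E u ≤ L / 2 * (q ^ 2 * ‖u - v‖ ^ 2) := hw.trans (by gcongr)
    _ ≤ L / 2 * (q ^ 2 * (2 / α * (E v - E u))) := by gcongr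
    _ = L / α * q ^ 2 * (E v - E u) := by field_simp

theorem div_mul_one_sub_sq_div_sq (α L : ℝ) :
    L / α * (1 - α ^ 2 / L ^ 2) = L / α - α / L := by
  rcases eq_or_ne α 0 with rfl | hα
  · simp
  rcases eq_or_ne L 0 with rfl | hL
  · simp
  field_simp

theorem sub_inv_lt_one_iff_lt_goldenRatio {x : ℝ} (hx : 0 < x) : x - x⁻¹ < 1 ↔ x < φ := by
  have hfactor : x * (x - x⁻¹ - 1) = (x - φ) * (x - ψ) := by
    field_simp
    linear_combination Real.sq_sqrt (show (0 : ℝ) ≤ 5 by norm_num)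
  have hψ : 0 < x - ψ := by linarith [goldenConj_neg]
  calc x - x⁻¹ < 1 ↔ x * (x - x⁻¹ - 1) < x * 0 := by rw [mul_lt_mul_iff_of_pos_left hx, sub_neg]
    _ ↔ (x - φ) * (x - ψ) < 0 * (x - ψ) := by rw [hfactor, mul_zero, zero_mul]
    _ ↔ x < φ := by rw [mul_lt_mul_iff_of_pos_right hψ, sub_neg]

theorem energy_contraction_from_norm_contraction_general
    {H : Type*} [NormedAddCommGroup H]
    (E : H → ℝ) (X : Set H) (uH : H)
    (α L q : ℝ) (hα : 0 < α) (hαL : α ≤ L) (hq : q ^ 2 = 1 - α ^ 2 / L ^ 2)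
    (henergy : ∀ v ∈ X, α / 2 * ‖uH - v‖ ^ 2 ≤ E v - E uH ∧
      E v - E uH ≤ L / 2 * ‖uH - v‖ ^ 2)
    (Φ : H → H) (hΦX : ∀ v ∈ X, Φ v ∈ X)
    (hctr : ∀ v ∈ X, ‖uH - Φ v‖ ≤ q * ‖uH - v‖) :
    (∀ v ∈ X, E (Φ v) - E uH ≤ L / α * q ^ 2 * (E v - E uH)) ∧
    L / α * q ^ 2 = L / α - α / L ∧
    (L / α - α / L < 1 ↔ L / α < (1 + Real.sqrt 5) / 2) := by
  have hL : 0 < L := hα.trans_le hαL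
  refine ⟨fun v hv => ?_, by rw [hq, div_mul_one_sub_sq_div_sq], ?_⟩
  · exact energy_sub_le_of_norm_sub_le E hα hL.le (henergy v hv).1
      (henergy (Φ v) (hΦX v hv)).2 (hctr v hv)
  · rw [← inv_div L α]
    exact sub_inv_lt_one_iff_lt_goldenRatio (by positivity)

/-- Norm contraction with `q² = 1 - α²/L²` implies energy contraction with the
modified factor `(L/α)q² = L/α - α/L`, which is `< 1` iff `L/α` is below the
golden ratio. -/
theorem energy_contraction_from_norm_contraction
    {H : Type*} [NormedAddCommGroup H] [NormedSpace ℝ H]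
    (E : H → ℝ) (X : Set H) (uH : H) (huH : uH ∈ X)
    (α L q : ℝ) (hα : 0 < α) (hαL : α ≤ L) (hq : q ^ 2 = 1 - α ^ 2 / L ^ 2)
    (henergy : ∀ v ∈ X, α / 2 * ‖uH - v‖ ^ 2 ≤ E v - E uH ∧
      E v - E uH ≤ L / 2 * ‖uH - v‖ ^ 2)
    (Φ : H → H) (hΦX : ∀ v ∈ X, Φ v ∈ X)
    (hctr : ∀ v ∈ X, ‖uH - Φ v‖ ≤ q * ‖uH - v‖) :
    (∀ v ∈ X, E (Φ v) - E uH ≤ L / α * q ^ 2 * (E v - E uH)) ∧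
    L / α * q ^ 2 = L / α - α / L ∧
    (L / α - α / L < 1 ↔ L / α < (1 + Real.sqrt 5) / 2) :=
  energy_contraction_from_norm_contraction_general E X uH α L q hα hαL hq henergy Φ hΦX hctr
end

section
/- Let (α_n)_{n∈ℕ₀} be a sequence of nonnegative reals and C > 0 a constant such that for all N ∈ ℕ₀ the tail bound Σ_{n=N+1}^∞ α_n ≤ C·α_N holds. Then the sequence converges linearly: α_{N+m} ≤ (1 + C)(1 + C^{-1})^{-m}·α_N for all N, m ∈ ℕ₀. -/
/-- Summability with uniform tail bound implies linear convergence: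
if `Σ_{n>N} a_n ≤ C·a_N` for all `N`, then
`a_{N+m} ≤ (1+C)(1+C⁻¹)^{-m}·a_N`. -/
theorem tail_summability_implies_linear_convergence
    (a : ℕ → ℝ) (C : ℝ) (hC : 0 < C)
    (hnonneg : ∀ n, 0 ≤ a n) (hsum : Summable a)
    (htail : ∀ N : ℕ, ∑' n : ℕ, a (N + 1 + n) ≤ C * a N) :
    ∀ N m : ℕ, a (N + m) ≤ (1 + C) * ((1 + C⁻¹) ^ m)⁻¹ * a N := by
  set T : ℕ → ℝ := fun N => ∑' n : ℕ, a (N + n) with hT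
  have hsummable : ∀ N, Summable (fun n => a (N + n)) := by
    intro N
    have := (summable_nat_add_iff N).mpr hsum
    simpa [add_comm] using this
  have hsplit : ∀ N, T N = a N + T (N + 1) := by
    intro N
    have := Summable.tsum_eq_zero_add (hsummable N)
    simpa [hT, add_comm, add_left_comm, add_assoc] using this
  have hTnonneg : ∀ N, 0 ≤ T N := fun N => tsum_nonneg (fun n => hnonneg _)
  have hTtail : ∀ N, T (N + 1) ≤ C * a N := by
    intro N
    have := htail N
    simpa [hT, add_comm, add_left_comm, add_assoc] using this
  have hq : 0 < 1 + C⁻¹ := by positivity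
  have hstep : ∀ N, T (N + 1) ≤ (1 + C⁻¹)⁻¹ * T N := by
    intro N
    rw [le_inv_mul_iff₀ hq, hsplit N]
    have : C⁻¹ * T (N + 1) ≤ a N := by
      rw [inv_mul_le_iff₀ hC]; linarith [hTtail N]
    nlinarith [this]
  have hTle : ∀ N m, T (N + m) ≤ ((1 + C⁻¹) ^ m)⁻¹ * T N := by
    intro N m
    induction m with
    | zero => simp
    | succ m ih =>
        calc T (N + (m + 1)) = T ((N + m) + 1) := by ring_nf
          _ ≤ (1 + C⁻¹)⁻¹ * T (N + m) := hstep _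
          _ ≤ (1 + C⁻¹)⁻¹ * (((1 + C⁻¹) ^ m)⁻¹ * T N) := by
              apply mul_le_mul_of_nonneg_left ih (by positivity)
          _ = ((1 + C⁻¹) ^ (m + 1))⁻¹ * T N := by
              rw [pow_succ]; field_simp
  intro N m
  have h1 : a (N + m) ≤ T (N + m) := by
    have := Summable.le_tsum (hsummable (N + m)) 0 (fun n _ => hnonneg _)
    simpa [hT] using this
  have h2 : T N ≤ (1 + C) * a N := by
    rw [hsplit N]; linarith [hTtail N]
  calc a (N + m) ≤ ((1 + C⁻¹) ^ m)⁻¹ * T N := le_trans h1 (hTle N m)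
    _ ≤ ((1 + C⁻¹) ^ m)⁻¹ * ((1 + C) * a N) := by
        apply mul_le_mul_of_nonneg_left h2 (by positivity)
    _ = (1 + C) * ((1 + C⁻¹) ^ m)⁻¹ * a N := by ring
end

section
/- Suppose stability on non-refined elements and reduction on refined elements for an error estimator: for a refinement T_h of T_H, η_h(T_h\T_H, v)² ≤ q² η_H(T_H\T_h, v)² with 0 < q < 1, and η_h(T_h∩T_H, v) ≤ η_H(T_h∩T_H, v) for v ∈ X_H. If moreover the Dörfler marking θ·η_H(v) ≤ η_H(M_H, v) holds with M_H ⊆ T_H \ T_h and 0 < θ ≤ 1, then η_h(v)² ≤ (1 − (1−q²)θ²)·η_H(v)², i.e., the estimator is strictly reduced on the refined mesh. -/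
/-- Estimator reduction: stability on non-refined elements, reduction on
refined elements, and Dörfler marking (with all marked elements refined)
imply strict reduction of the error estimator on the refined mesh. -/
theorem estimator_reduction
    {α : Type*} [DecidableEq α]
    (TH Th MH : Finset α) (ηH ηh : α → ℝ) (q θ : ℝ)
    (hq0 : 0 < q) (hq1 : q < 1) (hθ0 : 0 < θ) (hθ1 : θ ≤ 1)
    (hMH : MH ⊆ TH \ Th)
    (hred : ∑ T ∈ Th \ TH, ηh T ^ 2 ≤ q ^ 2 * ∑ T ∈ TH \ Th, ηH T ^ 2)
    (hstab : Real.sqrt (∑ T ∈ Th ∩ TH, ηh T ^ 2) ≤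
      Real.sqrt (∑ T ∈ Th ∩ TH, ηH T ^ 2))
    (hdoerfler : θ * Real.sqrt (∑ T ∈ TH, ηH T ^ 2) ≤
      Real.sqrt (∑ T ∈ MH, ηH T ^ 2)) :
    ∑ T ∈ Th, ηh T ^ 2 ≤ (1 - (1 - q ^ 2) * θ ^ 2) * ∑ T ∈ TH, ηH T ^ 2 := by
  set A := ∑ T ∈ Th ∩ TH, ηh T ^ 2 with hAdef
  set B := ∑ T ∈ Th \ TH, ηh T ^ 2 with hBdef
  set C := ∑ T ∈ Th ∩ TH, ηH T ^ 2 with hCdef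
  set D := ∑ T ∈ TH \ Th, ηH T ^ 2 with hDdef
  set M := ∑ T ∈ MH, ηH T ^ 2 with hMdef
  have hAnn : 0 ≤ A := Finset.sum_nonneg fun i _ => sq_nonneg _
  have hCnn : 0 ≤ C := Finset.sum_nonneg fun i _ => sq_nonneg _
  have hDnn : 0 ≤ D := Finset.sum_nonneg fun i _ => sq_nonneg _
  have hTh : ∑ T ∈ Th, ηh T ^ 2 = A + B := (Finset.sum_inter_add_sum_sdiff Th TH _).symm
  have hTH : ∑ T ∈ TH, ηH T ^ 2 = C + D := by
    rw [← Finset.sum_inter_add_sum_sdiff TH Th (fun T => ηH T ^ 2), Finset.inter_comm]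
  -- A ≤ C from stability
  have hAC : A ≤ C := by
    have h1 := Real.sq_sqrt hAnn
    have h2 := Real.sq_sqrt hCnn
    nlinarith [Real.sqrt_nonneg A, Real.sqrt_nonneg C]
  -- M ≤ D since MH ⊆ TH \ Th
  have hMD : M ≤ D := Finset.sum_le_sum_of_subset_of_nonneg hMH
    (fun i _ _ => sq_nonneg _)
  -- θ² (C + D) ≤ D from Dörfler
  have hCD : θ ^ 2 * (C + D) ≤ D := by
    have h1 := Real.sq_sqrt (by linarith : (0:ℝ) ≤ C + D)
    have h2 := Real.sq_sqrt (Finset.sum_nonneg fun i _ => sq_nonneg (ηH i) : (0:ℝ) ≤ M)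
    rw [hTH] at hdoerfler
    nlinarith [Real.sqrt_nonneg (C + D), Real.sqrt_nonneg M, mul_nonneg hθ0.le (Real.sqrt_nonneg (C + D))]
  rw [hTh, hTH]
  have key : (1 - q ^ 2) * (θ ^ 2 * (C + D)) ≤ (1 - q ^ 2) * D :=
    mul_le_mul_of_nonneg_left hCD (by nlinarith)
  nlinarith
end

section
/- Under the estimator axioms of stability (|η_h(U, v_h) − η_H(U, w_H)| ≤ C_stab‖v_h − w_H‖ for U ⊆ T_H∩T_h) and reliability (‖u⋆ − u⋆_H‖ ≤ C_rel·η_H(u⋆_H)), and the norm contraction ‖u⋆_H − Φ_H(v)‖ ≤ q‖u⋆_H − v‖ with 0 < q < 1, the quasi-error of an iterate u^k = Φ_H(u^{k-1}) satisfies ‖u⋆ − u^k‖ + η_H(u^k) ≤ C'·(η_H(u^k) + ‖u^k − u^{k-1}‖), where C' depends only on C_stab, C_rel, and q. -/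
/-- A posteriori error control for the quasi-error of an inexact iterate:
stability, reliability, and norm contraction imply
`‖u⋆ − u^k‖ + η(u^k) ≤ C'·(η(u^k) + ‖u^k − u^{k-1}‖)` with
`C' = (C_rel + 1) + (C_rel·C_stab + 1)·q/(1−q)`. -/
theorem quasi_error_reliable
    {H : Type*} [NormedAddCommGroup H] [NormedSpace ℝ H]
    (X : Set H) (η : H → ℝ) (Cstab Crel q : ℝ)
    (hCstab : 0 < Cstab) (hCrel : 0 < Crel) (hq0 : 0 < q) (hq1 : q < 1)
    (hηnonneg : ∀ v, 0 ≤ η v)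
    (hstab : ∀ v ∈ X, ∀ w ∈ X, |η v - η w| ≤ Cstab * ‖v - w‖)
    (ustar ustarH : H) (hustarH : ustarH ∈ X)
    (hrel : ‖ustar - ustarH‖ ≤ Crel * η ustarH)
    (Φ : H → H) (hΦX : ∀ v ∈ X, Φ v ∈ X)
    (hctr : ∀ v ∈ X, ‖ustarH - Φ v‖ ≤ q * ‖ustarH - v‖)
    (uprev : H) (huprev : uprev ∈ X) (uk : H) (huk : uk = Φ uprev) :
    ‖ustar - uk‖ + η uk ≤
      ((Crel + 1) + (Crel * Cstab + 1) * q / (1 - q)) *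
        (η uk + ‖uk - uprev‖) := by
  have hukX : uk ∈ X := huk ▸ hΦX uprev huprev
  have h1 : ‖ustarH - uk‖ ≤ q * ‖ustarH - uprev‖ := huk ▸ hctr uprev huprev
  have h2 : ‖ustarH - uprev‖ ≤ ‖ustarH - uk‖ + ‖uk - uprev‖ := by
    calc ‖ustarH - uprev‖ = ‖(ustarH - uk) + (uk - uprev)‖ := by abel_nf
      _ ≤ _ := norm_add_le _ _
  have hq1' : 0 < 1 - q := by linarith
  have h3 : ‖ustarH - uk‖ ≤ q / (1 - q) * ‖uk - uprev‖ := by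
    rw [div_mul_eq_mul_div, le_div_iff₀ hq1']
    nlinarith [norm_nonneg (ustarH - uk), norm_nonneg (uk - uprev)]
  have h4 : η ustarH ≤ η uk + Cstab * ‖ustarH - uk‖ := by
    have := hstab ustarH hustarH uk hukX
    have := abs_le.1 this
    linarith [this.2]
  have h5 : ‖ustar - uk‖ ≤ ‖ustar - ustarH‖ + ‖ustarH - uk‖ := by
    calc ‖ustar - uk‖ = ‖(ustar - ustarH) + (ustarH - uk)‖ := by abel_nf
      _ ≤ _ := norm_add_le _ _
  have hn1 := norm_nonneg (ustarH - uk)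
  have hn2 := norm_nonneg (uk - uprev)
  have hη := hηnonneg uk
  have key : ‖ustar - uk‖ ≤ Crel * η uk + (Crel * Cstab + 1) * ‖ustarH - uk‖ := by
    nlinarith
  have h6 : (Crel * Cstab + 1) * ‖ustarH - uk‖ ≤ (Crel * Cstab + 1) * (q / (1 - q) * ‖uk - uprev‖) := by
    apply mul_le_mul_of_nonneg_left h3; nlinarith
  have hc : 0 ≤ (Crel * Cstab + 1) * q / (1 - q) := by positivity
  have hc2 : 0 < Crel + 1 := by linarith
  have hid : (Crel * Cstab + 1) * (q / (1 - q) * ‖uk - uprev‖)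
      = (Crel * Cstab + 1) * q / (1 - q) * ‖uk - uprev‖ := by ring
  rw [hid] at h6
  have e1 := mul_nonneg hc hη
  have e2 := mul_nonneg hc2.le hn2
  nlinarith
end

section
/- Let u⋆_H be a fixed point of a contraction Φ_H in the norm ‖·‖ with factor 0 < q < 1, u^0 ∈ X_H, and u^k := Φ_H(u^{k-1}). Suppose additionally the stopping-criterion bound η(u^k) ≤ λ^{-1}‖u^k − u^{k-1}‖ for some λ > 0 and all k in a range 1 ≤ k ≤ K. Then the geometric-series bound Σ_{k=i+1}^{K} (‖u⋆_H − u^k‖ + η(u^k)) ≤ C·(‖u⋆_H − u^i‖ + η(u^i)) holds for all 0 ≤ i < K, with C depending only on q and λ. -/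
/-- Geometric-series summability of the quasi-error along the iterates of a
contractive solver with stopping-criterion bound: for iterates
`u^k = Φ(u^{k-1})` with `η(u^k) ≤ λ⁻¹‖u^k − u^{k-1}‖` for `1 ≤ k ≤ K`,
`Σ_{k=i+1}^{K} (‖u⋆_H − u^k‖ + η(u^k)) ≤ C·(‖u⋆_H − u^i‖ + η(u^i))`
with `C = (1 + 2/λ)/(1 − q)`. -/
theorem contractive_iterates_summability
    {H : Type*} [NormedAddCommGroup H] [NormedSpace ℝ H]
    (Φ : H → H) (ustarH : H) (η : H → ℝ) (q lam : ℝ)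
    (hq0 : 0 < q) (hq1 : q < 1) (hlam : 0 < lam)
    (hηnonneg : ∀ v, 0 ≤ η v)
    (hctr : ∀ v, ‖ustarH - Φ v‖ ≤ q * ‖ustarH - v‖)
    (u : ℕ → H) (K : ℕ)
    (hiter : ∀ k, 1 ≤ k → k ≤ K → u k = Φ (u (k - 1)))
    (hstop : ∀ k, 1 ≤ k → k ≤ K → η (u k) ≤ lam⁻¹ * ‖u k - u (k - 1)‖) :
    ∀ i, i < K →
      ∑ k ∈ Finset.Icc (i + 1) K, (‖ustarH - u k‖ + η (u k)) ≤
        (1 + 2 / lam) / (1 - q) * (‖ustarH - u i‖ + η (u i)) := by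
  intro i hi
  set E := ‖ustarH - u i‖ with hE
  have hE0 : 0 ≤ E := norm_nonneg _
  have hqle1 : q ≤ 1 := le_of_lt hq1
  have h1q : 0 < 1 - q := by linarith
  -- contraction power bound
  have hpow : ∀ n, i + n ≤ K → ‖ustarH - u (i + n)‖ ≤ q ^ n * E := by
    intro n
    induction n with
    | zero => intro _; simp [hE]
    | succ n ih =>
      intro hn
      have hn' : i + n ≤ K := by omega
      have h1 : 1 ≤ i + (n + 1) := by omega
      have heq : u (i + (n + 1)) = Φ (u (i + n)) := by
        have := hiter (i + (n + 1)) h1 (by omega)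
        simpa [Nat.add_sub_cancel, show i + (n + 1) - 1 = i + n by omega] using this
      calc ‖ustarH - u (i + (n + 1))‖ = ‖ustarH - Φ (u (i + n))‖ := by rw [heq]
        _ ≤ q * ‖ustarH - u (i + n)‖ := hctr _
        _ ≤ q * (q ^ n * E) := by
            exact mul_le_mul_of_nonneg_left (ih hn') (le_of_lt hq0)
        _ = q ^ (n + 1) * E := by ring
  -- termwise bound
  have hterm : ∀ k ∈ Finset.Icc (i + 1) K,
      ‖ustarH - u k‖ + η (u k) ≤ (1 + 2 / lam) * q ^ (k - (i + 1)) * E := by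
    intro k hk
    rw [Finset.mem_Icc] at hk
    obtain ⟨hk1, hk2⟩ := hk
    set n := k - (i + 1) with hn
    have hkeq : k = i + (n + 1) := by omega
    have hqn : 0 ≤ q ^ n := pow_nonneg (le_of_lt hq0) n
    have hbk : ‖ustarH - u k‖ ≤ q ^ n * E := by
      have := hpow (n + 1) (by omega)
      calc ‖ustarH - u k‖ ≤ q ^ (n + 1) * E := by rw [hkeq]; exact this
        _ = q * (q ^ n * E) := by ring
        _ ≤ 1 * (q ^ n * E) := by
            exact mul_le_mul_of_nonneg_right hqle1 (mul_nonneg hqn hE0)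
        _ = q ^ n * E := by ring
    have hbk1 : ‖ustarH - u (k - 1)‖ ≤ q ^ n * E := by
      have := hpow n (by omega)
      have : ‖ustarH - u (i + n)‖ ≤ q ^ n * E := this
      simpa [show k - 1 = i + n by omega] using this
    have hη : η (u k) ≤ lam⁻¹ * (2 * (q ^ n * E)) := by
      have h1 := hstop k (by omega) hk2
      have h2 : ‖u k - u (k - 1)‖ ≤ ‖ustarH - u (k - 1)‖ + ‖ustarH - u k‖ := by
        have : u k - u (k - 1) = (ustarH - u (k - 1)) - (ustarH - u k) := by abel
        rw [this]
        exact norm_sub_le _ _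
      calc η (u k) ≤ lam⁻¹ * ‖u k - u (k - 1)‖ := h1
        _ ≤ lam⁻¹ * (2 * (q ^ n * E)) := by
            apply mul_le_mul_of_nonneg_left _ (le_of_lt (inv_pos.mpr hlam))
            linarith
    have hlaminv : lam⁻¹ = 1 / lam := (one_div lam).symm
    calc ‖ustarH - u k‖ + η (u k) ≤ q ^ n * E + lam⁻¹ * (2 * (q ^ n * E)) := by
          linarith
      _ = (1 + 2 / lam) * q ^ n * E := by
          field_simp
  -- sum bound
  have hsum : ∑ k ∈ Finset.Icc (i + 1) K, (‖ustarH - u k‖ + η (u k)) ≤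
      ∑ k ∈ Finset.Icc (i + 1) K, (1 + 2 / lam) * q ^ (k - (i + 1)) * E :=
    Finset.sum_le_sum hterm
  have hgeom : ∑ k ∈ Finset.Icc (i + 1) K, q ^ (k - (i + 1)) ≤ (1 - q)⁻¹ := by
    rw [← Finset.Ico_add_one_right_eq_Icc, Finset.sum_Ico_eq_sum_range]
    have h1 : ∀ m ∈ Finset.range (K + 1 - (i + 1)), q ^ (i + 1 + m - (i + 1)) = q ^ m := by
      intro m _; congr 1; omega
    rw [Finset.sum_congr rfl h1]
    rw [geom_sum_eq (ne_of_lt hq1)]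
    set n := K + 1 - (i + 1)
    have hqn : 0 ≤ q ^ n := pow_nonneg hq0.le _
    have heq : (q ^ n - 1) / (q - 1) = (1 - q ^ n) * (1 - q)⁻¹ := by
      rw [← neg_div_neg_eq, neg_sub, neg_sub, div_eq_mul_inv]
    rw [heq]
    have hinv : 0 ≤ (1 - q)⁻¹ := le_of_lt (inv_pos.mpr h1q)
    calc (1 - q ^ n) * (1 - q)⁻¹ ≤ 1 * (1 - q)⁻¹ := by
          apply mul_le_mul_of_nonneg_right _ hinv
          linarith
      _ = (1 - q)⁻¹ := one_mul _
  have hC0 : 0 ≤ 1 + 2 / lam := by positivity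
  calc ∑ k ∈ Finset.Icc (i + 1) K, (‖ustarH - u k‖ + η (u k))
      ≤ ∑ k ∈ Finset.Icc (i + 1) K, (1 + 2 / lam) * q ^ (k - (i + 1)) * E := hsum
    _ = (1 + 2 / lam) * E * ∑ k ∈ Finset.Icc (i + 1) K, q ^ (k - (i + 1)) := by
        rw [Finset.mul_sum]; apply Finset.sum_congr rfl; intro k _; ring
    _ ≤ (1 + 2 / lam) * E * (1 - q)⁻¹ := by
        exact mul_le_mul_of_nonneg_left hgeom (mul_nonneg hC0 hE0)
    _ = (1 + 2 / lam) / (1 - q) * E := by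
        ring
    _ ≤ (1 + 2 / lam) / (1 - q) * (E + η (u i)) := by
        apply mul_le_mul_of_nonneg_left _ (by positivity)
        linarith [hηnonneg (u i)]
end

section
/- Suppose the norm contraction toward the Galerkin solution ‖u⋆_H − Φ_H(v)‖ ≤ q_ctr‖u⋆_H − v‖, estimator stability |η_H(v) − η_H(w)| ≤ C_stab‖v − w‖, and the stopping criterion ‖u^K − u^{K-1}‖ ≤ λ·η_H(u^K) for the final iterate u^K with u^k = Φ_H(u^{k-1}). If 0 < λ < λ₀ := (1 − q_ctr)/(C_stab·q_ctr), then the estimator for the final iterate and the exact Galerkin solution are equivalent: (1 − λ/λ₀)·η_H(u^K) ≤ η_H(u⋆_H) ≤ (1 + λ/λ₀)·η_H(u^K). -/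
/-- Estimator equivalence at the stopped iterate: under norm contraction,
estimator stability, and the stopping criterion `‖u^K − u^{K-1}‖ ≤ λ·η(u^K)`
with `0 < λ < λ₀ = (1 − q)/(C_stab·q)`, one has
`(1 − λ/λ₀)·η(u^K) ≤ η(u⋆_H) ≤ (1 + λ/λ₀)·η(u^K)`. -/
theorem estimator_equivalence_stopped_iterate
    {H : Type*} [NormedAddCommGroup H] [NormedSpace ℝ H]
    (Φ : H → H) (ustarH : H) (η : H → ℝ) (qctr Cstab lam : ℝ)
    (hq0 : 0 < qctr) (hq1 : qctr < 1) (hCstab : 0 < Cstab)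
    (hlam0 : 0 < lam) (hlam : lam < (1 - qctr) / (Cstab * qctr))
    (hctr : ∀ v, ‖ustarH - Φ v‖ ≤ qctr * ‖ustarH - v‖)
    (hstab : ∀ v w, |η v - η w| ≤ Cstab * ‖v - w‖)
    (uprev uK : H) (hiter : uK = Φ uprev)
    (hstop : ‖uK - uprev‖ ≤ lam * η uK) :
    (1 - lam / ((1 - qctr) / (Cstab * qctr))) * η uK ≤ η ustarH ∧
    η ustarH ≤ (1 + lam / ((1 - qctr) / (Cstab * qctr))) * η uK := by
  have hηK : 0 ≤ η uK := by nlinarith [norm_nonneg (uK - uprev)]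
  have h1q : 0 < 1 - qctr := by linarith
  have h1 : ‖ustarH - uK‖ ≤ qctr * (‖ustarH - uK‖ + ‖uK - uprev‖) := by
    calc ‖ustarH - uK‖ = ‖ustarH - Φ uprev‖ := by rw [hiter]
    _ ≤ qctr * ‖ustarH - uprev‖ := hctr uprev
    _ ≤ qctr * (‖ustarH - uK‖ + ‖uK - uprev‖) := by
        have := norm_sub_le_norm_sub_add_norm_sub ustarH uK uprev
        nlinarith
  have h2 : ‖ustarH - uK‖ ≤ qctr / (1 - qctr) * (lam * η uK) := by
    rw [div_mul_eq_mul_div, le_div_iff₀ h1q]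
    nlinarith
  have h3 : |η ustarH - η uK| ≤ Cstab * (qctr / (1 - qctr) * (lam * η uK)) := by
    calc |η ustarH - η uK| ≤ Cstab * ‖ustarH - uK‖ := hstab _ _
    _ ≤ _ := by nlinarith
  have hdiv : lam / ((1 - qctr) / (Cstab * qctr)) = Cstab * (qctr / (1 - qctr) * lam) := by
    field_simp
  rw [abs_le] at h3
  constructor <;> rw [hdiv] <;> nlinarith [h3.1, h3.2]
end

section
/- Suppose meshes form a refinement structure with overlay property #(T_H ⊕ T_h) ≤ #T_H + #T_h − #T₀ for T_H, T_h ∈ refine(T₀), splitting property, and let an adaptive sequence (T_ℓ) satisfy the mesh-closure estimate #T_ℓ − #T₀ ≤ C_mesh·Σ_{j<ℓ} #M_j together with the marked-set bound #M_ℓ ≤ C·ρ_ℓ^{-1/s} for error quantities ρ_ℓ > 0 satisfying linear convergence ρ_ℓ ≤ C_lin·q_lin^{ℓ−j}·ρ_j for j ≤ ℓ (with 0 < q_lin < 1). Then the optimal-rate bound holds: #T_ℓ − #T₀ + 1 ≤ C'·ρ_ℓ^{-1/s} for all ℓ, where C' depends only on C, C_mesh, C_lin, q_lin, and s. -/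
/-- Optimal-rate bound for the mesh sizes of an adaptive algorithm: the
mesh-closure estimate, the marked-set bound `#M_ℓ ≤ C·ρ_ℓ^{-1/s}`, and linear
convergence of the error quantities `ρ_ℓ` imply
`#T_ℓ − #T₀ + 1 ≤ C'·ρ_ℓ^{-1/s}`. -/
theorem adaptive_optimal_mesh_size_bound
    (Tcard Mcard : ℕ → ℕ) (ρ : ℕ → ℝ) (s C Cmesh Clin qlin : ℝ)
    (hs : 0 < s) (hC : 0 < C) (hCmesh : 0 < Cmesh)
    (hClin : 1 ≤ Clin) (hq0 : 0 < qlin) (hq1 : qlin < 1)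
    (hρ : ∀ ℓ, 0 < ρ ℓ)
    (hclosure : ∀ ℓ : ℕ,
      (Tcard ℓ : ℝ) - Tcard 0 ≤ Cmesh * ∑ j ∈ Finset.range ℓ, (Mcard j : ℝ))
    (hmark : ∀ ℓ : ℕ, (Mcard ℓ : ℝ) ≤ C * ρ ℓ ^ (-(1 / s)))
    (hlin : ∀ j ℓ : ℕ, j ≤ ℓ → ρ ℓ ≤ Clin * qlin ^ (ℓ - j) * ρ j) :
    ∃ C' : ℝ, 0 < C' ∧
      ∀ ℓ : ℕ, (Tcard ℓ : ℝ) - Tcard 0 + 1 ≤ C' * ρ ℓ ^ (-(1 / s)) := by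
  have hClin0 : (0:ℝ) < Clin := lt_of_lt_of_le one_pos hClin
  set Q : ℝ := qlin ^ (1 / s) with hQdef
  have hs' : 0 < 1 / s := by positivity
  have hQ0 : 0 < Q := Real.rpow_pos_of_pos hq0 _
  have hQ1 : Q < 1 := Real.rpow_lt_one hq0.le hq1 (by positivity)
  -- key comparison of error quantities
  have key : ∀ j ℓ : ℕ, j ≤ ℓ →
      ρ j ^ (-(1 / s)) ≤ Clin ^ (1 / s) * Q ^ (ℓ - j) * ρ ℓ ^ (-(1 / s)) := by
    intro j ℓ hjℓ
    have hρj := hρ j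
    have hρℓ := hρ ℓ
    have h1 : ρ ℓ ^ (1 / s) ≤ (Clin * qlin ^ (ℓ - j) * ρ j) ^ (1 / s) :=
      Real.rpow_le_rpow hρℓ.le (hlin j ℓ hjℓ) hs'.le
    have h2 : (Clin * qlin ^ (ℓ - j) * ρ j) ^ (1 / s)
        = Clin ^ (1 / s) * Q ^ (ℓ - j) * ρ j ^ (1 / s) := by
      rw [Real.mul_rpow (by positivity) hρj.le,
        Real.mul_rpow hClin0.le (by positivity),
        ← Real.rpow_natCast qlin (ℓ - j), ← Real.rpow_mul hq0.le,
        mul_comm ((ℓ - j : ℕ) : ℝ), Real.rpow_mul hq0.le, Real.rpow_natCast]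
    have h3 : ρ ℓ ^ (1 / s) ≤ (Clin ^ (1 / s) * Q ^ (ℓ - j)) * ρ j ^ (1 / s) :=
      h1.trans_eq h2
    have ha : 0 < ρ j ^ (1 / s) := Real.rpow_pos_of_pos hρj _
    have hb : 0 < ρ ℓ ^ (1 / s) := Real.rpow_pos_of_pos hρℓ _
    rw [Real.rpow_neg hρj.le, Real.rpow_neg hρℓ.le, inv_eq_one_div,
      inv_eq_one_div, mul_one_div, div_le_div_iff₀ ha hb, one_mul]
    exact h3
  -- geometric sum bound
  have hgeom : ∀ ℓ : ℕ, ∑ j ∈ Finset.range ℓ, Q ^ (ℓ - j) ≤ (1 - Q)⁻¹ := by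
    intro ℓ
    have h1 : ∑ j ∈ Finset.range ℓ, Q ^ (ℓ - j) ≤ ∑ j ∈ Finset.range ℓ, Q ^ j := by
      rw [← Finset.sum_range_reflect (fun j => Q ^ (ℓ - j)) ℓ]
      refine Finset.sum_le_sum fun i hi => ?_
      have hi' := Finset.mem_range.mp hi
      have : ℓ - (ℓ - 1 - i) = i + 1 := by omega
      rw [this]
      exact pow_le_pow_of_le_one hQ0.le hQ1.le (Nat.le_succ i)
    refine h1.trans ?_
    have h1Q : (0:ℝ) < 1 - Q := by linarith
    rw [geom_sum_eq hQ1.ne ℓ]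
    have heq : (Q ^ ℓ - 1) / (Q - 1) = (1 - Q ^ ℓ) / (1 - Q) := by
      rw [← neg_div_neg_eq]; ring_nf
    rw [heq, div_le_iff₀ h1Q, inv_mul_cancel₀ h1Q.ne']
    have : 0 ≤ Q ^ ℓ := by positivity
    linarith
  -- the additive constant
  set K : ℝ := Cmesh * C * Clin ^ (1 / s) * (1 - Q)⁻¹ + (Clin * ρ 0) ^ (1 / s)
    with hKdef
  have h1Q : (0:ℝ) < 1 - Q := by linarith
  have hK0 : 0 < K := by
    have hc1 : 0 < Clin ^ (1 / s) := Real.rpow_pos_of_pos hClin0 _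
    have hc2 : 0 < (Clin * ρ 0) ^ (1 / s) := Real.rpow_pos_of_pos (mul_pos hClin0 (hρ 0)) _
    have h3 : 0 < Cmesh * C * Clin ^ (1 / s) * (1 - Q)⁻¹ :=
      mul_pos (mul_pos (mul_pos hCmesh hC) hc1) (inv_pos.mpr h1Q)
    rw [hKdef]; linarith
  refine ⟨K, hK0, fun ℓ => ?_⟩
  have hone : 1 ≤ (Clin * ρ 0) ^ (1 / s) * ρ ℓ ^ (-(1 / s)) := by
    have hρℓ := hρ ℓ
    have h1 : ρ ℓ ≤ Clin * ρ 0 := by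
      have := hlin 0 ℓ (Nat.zero_le ℓ)
      have hqpow : qlin ^ (ℓ - 0) ≤ 1 := pow_le_one₀ hq0.le hq1.le
      have h5 : Clin * qlin ^ (ℓ - 0) * ρ 0 ≤ Clin * ρ 0 :=
        mul_le_mul_of_nonneg_right (mul_le_of_le_one_right hClin0.le hqpow) (hρ 0).le
      linarith
    have h2 : ρ ℓ ^ (1 / s) ≤ (Clin * ρ 0) ^ (1 / s) :=
      Real.rpow_le_rpow hρℓ.le h1 hs'.le
    have hb : 0 < ρ ℓ ^ (1 / s) := Real.rpow_pos_of_pos hρℓ _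
    rw [Real.rpow_neg hρℓ.le, ← div_eq_mul_inv, le_div_iff₀ hb, one_mul]
    exact h2
  have hsum : ∑ j ∈ Finset.range ℓ, (Mcard j : ℝ)
      ≤ C * Clin ^ (1 / s) * (1 - Q)⁻¹ * ρ ℓ ^ (-(1 / s)) := by
    calc ∑ j ∈ Finset.range ℓ, (Mcard j : ℝ)
        ≤ ∑ j ∈ Finset.range ℓ,
            C * (Clin ^ (1 / s) * Q ^ (ℓ - j) * ρ ℓ ^ (-(1 / s))) := by
          refine Finset.sum_le_sum fun j hj => ?_
          exact (hmark j).trans (by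
            have := key j ℓ (Nat.le_of_lt (Finset.mem_range.mp hj))
            exact mul_le_mul_of_nonneg_left this hC.le)
      _ = C * Clin ^ (1 / s) * ρ ℓ ^ (-(1 / s))
            * ∑ j ∈ Finset.range ℓ, Q ^ (ℓ - j) := by
          rw [Finset.mul_sum]; congr 1; ext j; ring
      _ ≤ C * Clin ^ (1 / s) * ρ ℓ ^ (-(1 / s)) * (1 - Q)⁻¹ := by
          refine mul_le_mul_of_nonneg_left (hgeom ℓ) ?_
          have := Real.rpow_pos_of_pos (hρ ℓ) (-(1 / s))
          have := Real.rpow_pos_of_pos hClin0 (1 / s)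
          positivity
      _ = C * Clin ^ (1 / s) * (1 - Q)⁻¹ * ρ ℓ ^ (-(1 / s)) := by ring
  have h4 : (Tcard ℓ : ℝ) - Tcard 0
      ≤ Cmesh * C * Clin ^ (1 / s) * (1 - Q)⁻¹ * ρ ℓ ^ (-(1 / s)) := by
    calc (Tcard ℓ : ℝ) - Tcard 0 ≤ Cmesh * ∑ j ∈ Finset.range ℓ, (Mcard j : ℝ) :=
        hclosure ℓ
      _ ≤ Cmesh * (C * Clin ^ (1 / s) * (1 - Q)⁻¹ * ρ ℓ ^ (-(1 / s))) :=
        mul_le_mul_of_nonneg_left hsum hCmesh.le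
      _ = Cmesh * C * Clin ^ (1 / s) * (1 - Q)⁻¹ * ρ ℓ ^ (-(1 / s)) := by ring
  rw [hKdef, add_mul]
  linarith
end

section
/- Suppose a sequence of error quantities (Δ_n)_{n∈ℕ₀} (indexed by the linearly ordered steps of an adaptive algorithm with meshes T_n ∈ refine(T₀)) satisfies linear convergence Δ_n ≤ C_lin q_lin^{n−m} Δ_m for m ≤ n (0 < q_lin < 1), and the mesh-size bound #T_n − #T₀ + 1 ≤ C·M^{1/s}·Δ_n^{-1/s} for a constant M > 0 and s > 0. Then the cumulative-cost bound holds: for all n, (Σ_{m=0}^{n} #T_m)^s · Δ_n ≤ C''·M, where C'' depends only on C, C_lin, q_lin, #T₀, and s. -/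
lemma aux_geom_sum_le {q : ℝ} (h0 : 0 ≤ q) (h1 : q < 1) (n : ℕ) :
    ∑ k ∈ Finset.range n, q ^ k ≤ (1 - q)⁻¹ := by
  have hne : q ≠ 1 := ne_of_lt h1
  rw [geom_sum_eq hne]
  have h1q : (0:ℝ) < 1 - q := by linarith
  rw [div_le_iff_of_neg (by linarith : q - 1 < 0)]
  have hqn : 0 ≤ q ^ n := pow_nonneg h0 n
  have : (1 - q)⁻¹ * (1 - q) = 1 := inv_mul_cancel₀ (ne_of_gt h1q)
  nlinarith [inv_pos.mpr h1q]

/-- Optimal rates with respect to the cumulative computational costs: linear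
convergence of the quasi-errors `Δ_n` and the mesh-size bound
`#T_n − #T₀ + 1 ≤ C·M^{1/s}·Δ_n^{-1/s}` imply
`(Σ_{m≤n} #T_m)^s · Δ_n ≤ C''·M`. -/
theorem adaptive_optimal_cost_bound
    (Tcard : ℕ → ℕ) (Δ : ℕ → ℝ) (s C Clin qlin M : ℝ)
    (hs : 0 < s) (hC : 0 < C) (hClin : 1 ≤ Clin)
    (hq0 : 0 < qlin) (hq1 : qlin < 1) (hM : 0 < M)
    (hΔ : ∀ n, 0 < Δ n)
    (hT0 : 0 < Tcard 0) (hTmono : ∀ n, Tcard 0 ≤ Tcard n)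
    (hlin : ∀ m n : ℕ, m ≤ n → Δ n ≤ Clin * qlin ^ (n - m) * Δ m)
    (hsize : ∀ n : ℕ,
      (Tcard n : ℝ) - Tcard 0 + 1 ≤ C * M ^ (1 / s) * Δ n ^ (-(1 / s))) :
    ∃ C'' : ℝ, 0 < C'' ∧
      ∀ n : ℕ, (∑ m ∈ Finset.range (n + 1), (Tcard m : ℝ)) ^ s * Δ n ≤
        C'' * M := by
  have hs' : 0 < 1 / s := by positivity
  set q : ℝ := qlin ^ (1 / s) with hqdef
  have hq0' : 0 < q := Real.rpow_pos_of_pos hq0 _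
  have hq1' : q < 1 := Real.rpow_lt_one hq0.le hq1 hs'
  have hClin0 : (0:ℝ) < Clin := lt_of_lt_of_le one_pos hClin
  have hT0R : (0:ℝ) < (Tcard 0 : ℝ) := by exact_mod_cast hT0
  have hMs : (0:ℝ) < M ^ (1 / s) := Real.rpow_pos_of_pos hM _
  have hCls : (0:ℝ) < Clin ^ (1 / s) := Real.rpow_pos_of_pos hClin0 _
  have hΔs : ∀ k, (0:ℝ) < Δ k ^ (-(1 / s)) := fun k => Real.rpow_pos_of_pos (hΔ k) _
  have hinv : ∀ k, ((Δ k)⁻¹ : ℝ) ^ (1 / s) = Δ k ^ (-(1 / s)) := fun k => by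
    rw [Real.inv_rpow (hΔ k).le, ← Real.rpow_neg (hΔ k).le]
  set K : ℝ := (Tcard 0 : ℝ) * C * Clin ^ (1 / s) * (1 - q)⁻¹ with hKdef
  have h1q : (0:ℝ) < 1 - q := by linarith
  have hK : 0 < K := by positivity
  refine ⟨K ^ s, Real.rpow_pos_of_pos hK s, fun n => ?_⟩
  -- Step 1: pointwise bound on Δ m ^ (-(1/s))
  have step : ∀ m ∈ Finset.range (n + 1),
      Δ m ^ (-(1 / s)) ≤ Clin ^ (1 / s) * Δ n ^ (-(1 / s)) * q ^ (n - m) := by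
    intro m hm
    have hmn : m ≤ n := Nat.lt_succ_iff.mp (Finset.mem_range.mp hm)
    have h1 : (Δ m)⁻¹ ≤ Clin * qlin ^ (n - m) * (Δ n)⁻¹ := by
      rw [show Clin * qlin ^ (n - m) * (Δ n)⁻¹ = Clin * qlin ^ (n - m) / Δ n by ring,
        inv_eq_one_div, div_le_div_iff₀ (hΔ m) (hΔ n)]
      nlinarith [hlin m n hmn]
    have h2 := Real.rpow_le_rpow (inv_nonneg.mpr (hΔ m).le) h1 hs'.le
    have hqq : ((qlin ^ (n - m) : ℝ)) ^ (1 / s) = q ^ (n - m) := by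
      rw [← Real.rpow_natCast qlin (n - m), ← Real.rpow_mul hq0.le, mul_comm,
        Real.rpow_mul hq0.le, Real.rpow_natCast]
    calc Δ m ^ (-(1 / s)) = ((Δ m)⁻¹) ^ (1 / s) := (hinv m).symm
      _ ≤ (Clin * qlin ^ (n - m) * (Δ n)⁻¹) ^ (1 / s) := h2
      _ = Clin ^ (1 / s) * Δ n ^ (-(1 / s)) * q ^ (n - m) := by
          rw [Real.mul_rpow (mul_nonneg hClin0.le (pow_nonneg hq0.le _))
              (inv_nonneg.mpr (hΔ n).le),
            Real.mul_rpow hClin0.le (pow_nonneg hq0.le _), hqq, hinv n]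
          ring
  -- Step 2: bound on the sum of mesh sizes
  have hsum : (∑ m ∈ Finset.range (n + 1), (Tcard m : ℝ)) ≤
      K * M ^ (1 / s) * Δ n ^ (-(1 / s)) := by
    have hbT : ∀ m ∈ Finset.range (n + 1), (Tcard m : ℝ) ≤
        (Tcard 0 : ℝ) * (C * M ^ (1 / s) * Δ m ^ (-(1 / s))) := by
      intro m _
      have h1 : (Tcard m : ℝ) ≤ (Tcard 0 : ℝ) * ((Tcard m : ℝ) - Tcard 0 + 1) := by
        have : (Tcard 0 : ℝ) ≤ (Tcard m : ℝ) := by exact_mod_cast hTmono m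
        have h1' : (1:ℝ) ≤ (Tcard 0 : ℝ) := by exact_mod_cast hT0
        nlinarith
      calc (Tcard m : ℝ) ≤ (Tcard 0 : ℝ) * ((Tcard m : ℝ) - Tcard 0 + 1) := h1
        _ ≤ (Tcard 0 : ℝ) * (C * M ^ (1 / s) * Δ m ^ (-(1 / s))) :=
            mul_le_mul_of_nonneg_left (hsize m) hT0R.le
    calc (∑ m ∈ Finset.range (n + 1), (Tcard m : ℝ))
        ≤ ∑ m ∈ Finset.range (n + 1),
            (Tcard 0 : ℝ) * (C * M ^ (1 / s) * Δ m ^ (-(1 / s))) :=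
          Finset.sum_le_sum hbT
      _ = (Tcard 0 : ℝ) * C * M ^ (1 / s) *
            ∑ m ∈ Finset.range (n + 1), Δ m ^ (-(1 / s)) := by
          rw [Finset.mul_sum]; congr 1; ext m; ring
      _ ≤ (Tcard 0 : ℝ) * C * M ^ (1 / s) *
            ∑ m ∈ Finset.range (n + 1),
              Clin ^ (1 / s) * Δ n ^ (-(1 / s)) * q ^ (n - m) := by
          exact mul_le_mul_of_nonneg_left (Finset.sum_le_sum step)
            (by positivity)
      _ = (Tcard 0 : ℝ) * C * M ^ (1 / s) * (Clin ^ (1 / s) * Δ n ^ (-(1 / s)) *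
            ∑ m ∈ Finset.range (n + 1), q ^ (n - m)) := by
          simp only [Finset.mul_sum]
      _ ≤ (Tcard 0 : ℝ) * C * M ^ (1 / s) * (Clin ^ (1 / s) * Δ n ^ (-(1 / s)) *
            (1 - q)⁻¹) := by
          refine mul_le_mul_of_nonneg_left ?_
            (mul_nonneg (mul_nonneg hT0R.le hC.le) hMs.le)
          refine mul_le_mul_of_nonneg_left ?_ (mul_nonneg hCls.le (hΔs n).le)
          have hreflect : ∑ m ∈ Finset.range (n + 1), q ^ (n - m) =
              ∑ k ∈ Finset.range (n + 1), q ^ k := by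
            rw [← Finset.sum_range_reflect (fun k => q ^ k) (n + 1)]
            exact Finset.sum_congr rfl fun m hm => by congr 1
          rw [hreflect]
          exact aux_geom_sum_le hq0'.le hq1' (n + 1)
      _ = K * M ^ (1 / s) * Δ n ^ (-(1 / s)) := by rw [hKdef]; ring
  -- Step 3: raise to the power s
  have hfin := Real.rpow_le_rpow (by positivity) hsum hs.le
  have hrhs : (K * M ^ (1 / s) * Δ n ^ (-(1 / s))) ^ s = K ^ s * M * (Δ n)⁻¹ := by
    rw [Real.mul_rpow (mul_nonneg hK.le hMs.le) (hΔs n).le,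
      Real.mul_rpow hK.le hMs.le,
      ← Real.rpow_mul hM.le, ← Real.rpow_mul (hΔ n).le,
      one_div_mul_cancel (ne_of_gt hs), Real.rpow_one,
      show -(1 / s) * s = -1 by field_simp, Real.rpow_neg_one]
  rw [hrhs] at hfin
  calc (∑ m ∈ Finset.range (n + 1), (Tcard m : ℝ)) ^ s * Δ n
      ≤ K ^ s * M * (Δ n)⁻¹ * Δ n := mul_le_mul_of_nonneg_right hfin (hΔ n).le
    _ = K ^ s * M := by
        rw [mul_assoc, inv_mul_cancel₀ (ne_of_gt (hΔ n)), mul_one]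
end

section
/- Let q ∈ (0,1), C_stab > 0, and let u⋆_ℓ, u_ℓ^K be elements of a normed space with ‖u⋆_ℓ − u_ℓ^K‖ ≤ C_stab^{-1}·μ·η(u_ℓ^K) for some 0 < μ < 1, and let R ⊆ T be a subset with θ'·η⋆(T) ≤ η⋆(R), where η⋆, η denote estimators satisfying |η⋆(U) − η(U)| ≤ C_stab‖u⋆_ℓ − u_ℓ^K‖ for all U ⊆ T and (1−μ)η(T) ≤ η⋆(T). Then R satisfies the Dörfler marking for η with parameter θ = (1−μ)θ' − μ, i.e., θ·η(T) ≤ η(R), provided θ > 0. -/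
/-- Transfer of the Dörfler marking from the estimator at the exact Galerkin
solution (`ηstar`) to the estimator at the inexact iterate (`η`): if
`θ'·η⋆(T) ≤ η⋆(R)`, `|η⋆(U) − η(U)| ≤ C_stab·d` for all `U ⊆ T`,
`d ≤ C_stab⁻¹·μ·η(T)`, and `(1−μ)·η(T) ≤ η⋆(T)`, then
`((1−μ)θ' − μ)·η(T) ≤ η(R)`. -/
theorem doerfler_marking_transfer
    {α : Type*} (T R : Finset α) (hR : R ⊆ T)
    (ηstar η : Finset α → ℝ) (Cstab μ θ' d : ℝ)
    (hCstab : 0 < Cstab) (hμ0 : 0 < μ) (hμ1 : μ < 1)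
    (hθ'0 : 0 < θ') (hθ'1 : θ' ≤ 1)
    (hd0 : 0 ≤ d) (hd : d ≤ Cstab⁻¹ * μ * η T)
    (hstab : ∀ U ⊆ T, |ηstar U - η U| ≤ Cstab * d)
    (hlow : (1 - μ) * η T ≤ ηstar T)
    (hdoerfler : θ' * ηstar T ≤ ηstar R)
    (hθpos : 0 < (1 - μ) * θ' - μ) :
    ((1 - μ) * θ' - μ) * η T ≤ η R := by
  have hR' := hstab R hR
  have h1 : ηstar R - η R ≤ Cstab * d := (abs_le.mp hR').2
  have h2 : Cstab * d ≤ μ * η T := by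
    calc Cstab * d ≤ Cstab * (Cstab⁻¹ * μ * η T) := by
          exact mul_le_mul_of_nonneg_left hd hCstab.le
      _ = μ * η T := by field_simp
  nlinarith [mul_le_mul_of_nonneg_left hlow hθ'0.le]
end

section
/- Suppose an adaptive algorithm produces a linearly ordered sequence of quasi-errors (Δ_j)_{j∈ℕ₀} in ℝ_{>0} satisfying the uniform tail-summability Σ_{j>i} Δ_j ≤ C_sum·Δ_i for all i ∈ ℕ₀ with C_sum > 0. Then linear convergence holds in the form Δ_j ≤ C_lin·q_lin^{j−i}·Δ_i for all i ≤ j, with C_lin = 1 + C_sum and q_lin = 1/(1 + C_sum^{-1}) = C_sum/(C_sum + 1) < 1. -/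
/-- Uniform tail-summability of the quasi-errors implies full linear
convergence with explicit constants `C_lin = 1 + C_sum` and
`q_lin = C_sum/(C_sum + 1) < 1`. -/
theorem tail_summability_linear_convergence_explicit
    (Δ : ℕ → ℝ) (Csum : ℝ) (hCsum : 0 < Csum)
    (hpos : ∀ j, 0 < Δ j) (hsum : Summable Δ)
    (htail : ∀ i : ℕ, ∑' n : ℕ, Δ (i + 1 + n) ≤ Csum * Δ i) :
    ∀ i j : ℕ, i ≤ j →
      Δ j ≤ (1 + Csum) * (Csum / (Csum + 1)) ^ (j - i) * Δ i := by
  set q : ℝ := Csum / (Csum + 1) with hq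
  have hCsum1 : (0:ℝ) < Csum + 1 := by linarith
  have hq0 : 0 < q := div_pos hCsum hCsum1
  -- tail sums
  set T : ℕ → ℝ := fun i => ∑' n : ℕ, Δ (i + 1 + n) with hT
  have hsummable : ∀ i : ℕ, Summable (fun n => Δ (i + 1 + n)) := by
    intro i
    have := (summable_nat_add_iff (i + 1)).mpr hsum
    exact this.congr (fun n => by ring_nf)
  have hrec : ∀ i, T i = Δ (i + 1) + T (i + 1) := by
    intro i
    have h0 := Summable.tsum_eq_zero_add (hsummable i)
    simp only [hT]
    rw [h0]
    congr 1
    exact tsum_congr (fun n => by congr 1; omega)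
  have hTpos : ∀ i, 0 < T i := by
    intro i
    have := Summable.le_tsum (hsummable i) 0 (fun n _ => (hpos _).le)
    have h := hpos (i + 1 + 0)
    exact lt_of_lt_of_le h this
  have hstep : ∀ i, T (i + 1) ≤ q * T i := by
    intro i
    have h1 : T (i + 1) ≤ Csum * Δ (i + 1) := htail (i + 1)
    have h2 : T i = Δ (i + 1) + T (i + 1) := hrec i
    -- Csum * T i = Csum * Δ(i+1) + Csum * T(i+1) ≥ T(i+1) + Csum*T(i+1)
    rw [hq, div_mul_eq_mul_div, le_div_iff₀ hCsum1]
    nlinarith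
  have hiter : ∀ i m : ℕ, T (i + m) ≤ q ^ m * T i := by
    intro i m
    induction m with
    | zero => simp
    | succ m ih =>
      have := hstep (i + m)
      calc T (i + (m + 1)) = T ((i + m) + 1) := by ring_nf
        _ ≤ q * T (i + m) := hstep (i + m)
        _ ≤ q * (q ^ m * T i) := by
            exact mul_le_mul_of_nonneg_left ih hq0.le
        _ = q ^ (m + 1) * T i := by ring
  intro i j hij
  rcases Nat.eq_or_lt_of_le hij with h | h
  · subst h
    simp only [Nat.sub_self, pow_zero, mul_one]
    nlinarith [hpos i, (hpos i).le]
  · -- j = i + m + 1 with m = j - i - 1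
    obtain ⟨m, hm⟩ : ∃ m, j = i + m + 1 := ⟨j - i - 1, by omega⟩
    subst hm
    have hΔleT : Δ (i + m + 1) ≤ T (i + m) := by
      have := Summable.le_tsum (hsummable (i + m)) 0 (fun n _ => (hpos _).le)
      simpa using this
    have h1 : T (i + m) ≤ q ^ m * T i := hiter i m
    have h2 : T i ≤ Csum * Δ i := by
      have := htail i
      simpa [hT] using this
    have hqm : (0:ℝ) ≤ q ^ m := (pow_pos hq0 m).le
    have hsub : i + m + 1 - i = m + 1 := by omega
    rw [hsub]
    have key : Δ (i + m + 1) ≤ q ^ m * (Csum * Δ i) := by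
      calc Δ (i + m + 1) ≤ T (i + m) := hΔleT
        _ ≤ q ^ m * T i := h1
        _ ≤ q ^ m * (Csum * Δ i) := mul_le_mul_of_nonneg_left h2 hqm
    have heq : (1 + Csum) * q ^ (m + 1) = q ^ m * Csum := by
      rw [pow_succ, hq]
      field_simp
      ring
    calc Δ (i + m + 1) ≤ q ^ m * (Csum * Δ i) := key
      _ = (1 + Csum) * q ^ (m + 1) * Δ i := by rw [heq]; ring
end
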